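/- arXiv:2505.07274 — 4 statements merged into one kernel-verified Lean document; each statement's English description precedes it below -/
import Mathlib

section
/- (Naive additive KL bound; the paper's 'Naive Additive (2κ′ + 2ε/τ)' bound.) The KL divergence between the cached and true Gibbs posteriors satisfies D_KL(π̃ ∥ π*) ≤ 2·(κ + ε/τ). -/
/-!
The unnormalized Gibbs weights `p̂ e^{Q/τ}` and `p e^{Q*/τ}` have log-ratio at most
`M = κ + ε/τ` in absolute value, so their partition functions differ by a factor at most
`e^M`, and the log-ratio of the normalized posteriors is at most `2M` pointwise. The KL
divergence is the `π̃`-average of that log-ratio.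
-/

open Real Finset

section Normalize

variable {ι : Type*} [Fintype ι] {w v : ι → ℝ} {M : ℝ}

theorem sum_le_exp_mul_sum_of_log_sub_le (hw : ∀ i, 0 < w i) (hv : ∀ i, 0 < v i)
    (h : ∀ i, log (v i) - log (w i) ≤ M) : ∑ i, v i ≤ exp M * ∑ i, w i := by
  rw [mul_sum]
  refine sum_le_sum fun i _ => ?_
  rw [← log_le_log_iff (hv i) (mul_pos (exp_pos M) (hw i)), log_mul (exp_ne_zero M) (hw i).ne',
    log_exp]
  linarith [h i]

theorem log_div_sum_div_div_sum_le [Nonempty ι] (hw : ∀ i, 0 < w i) (hv : ∀ i, 0 < v i)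
    (h : ∀ i, |log (w i) - log (v i)| ≤ M) (i : ι) :
    log ((w i / ∑ j, w j) / (v i / ∑ j, v j)) ≤ 2 * M := by
  have hW : 0 < ∑ j, w j := sum_pos (fun j _ => hw j) univ_nonempty
  have hV : 0 < ∑ j, v j := sum_pos (fun j _ => hv j) univ_nonempty
  have hsums : ∑ j, v j ≤ exp M * ∑ j, w j :=
    sum_le_exp_mul_sum_of_log_sub_le hw hv fun j => by linarith [(abs_le.mp (h j)).1]
  have hlogsums : log (∑ j, v j) ≤ M + log (∑ j, w j) := by
    rw [← log_exp M, ← log_mul (exp_ne_zero M) hW.ne']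
    exact log_le_log hV hsums
  rw [log_div (div_pos (hw i) hW).ne' (div_pos (hv i) hV).ne', log_div (hw i).ne' hW.ne',
    log_div (hv i).ne' hV.ne']
  linarith [(abs_le.mp (h i)).2]

end Normalize

theorem sum_mul_le_of_sum_eq_one {ι : Type*} {s : Finset ι} {q f : ι → ℝ} {c : ℝ}
    (hq : ∀ i ∈ s, 0 ≤ q i) (hsum : ∑ i ∈ s, q i = 1) (hf : ∀ i ∈ s, f i ≤ c) :
    ∑ i ∈ s, q i * f i ≤ c :=
  calc ∑ i ∈ s, q i * f i ≤ ∑ i ∈ s, q i * c :=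
        sum_le_sum fun i hi => mul_le_mul_of_nonneg_left (hf i hi) (hq i hi)
    _ = c := by rw [← sum_mul, hsum, one_mul]

theorem abs_log_gibbs_sub_log_gibbs_le {p' p Q' Q τ κ ε : ℝ} (hp' : 0 < p') (hp : 0 < p)
    (hτ : 0 < τ) (hprior : |log p' - log p| ≤ κ) (hQ : |Q' - Q| ≤ ε) :
    |log (p' * exp (Q' / τ)) - log (p * exp (Q / τ))| ≤ κ + ε / τ := by
  rw [log_mul hp'.ne' (exp_ne_zero _), log_mul hp.ne' (exp_ne_zero _), log_exp, log_exp,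
    add_sub_add_comm, ← sub_div]
  calc |log p' - log p + (Q' - Q) / τ| ≤ |log p' - log p| + |Q' - Q| / τ := by
        simpa only [abs_div, abs_of_pos hτ] using abs_add_le (log p' - log p) ((Q' - Q) / τ)
    _ ≤ κ + ε / τ := by gcongr

theorem kl_naive_additive_bound_general
    {A : Type*} [Fintype A] [Nonempty A]
    (p phat : A → ℝ) (hp : ∀ a, 0 < p a) (hphat : ∀ a, 0 < phat a)
    (Qstar Q : A → ℝ) (τ : ℝ) (hτ : 0 < τ)
    (κ ε : ℝ)
    (hprior : ∀ a, |Real.log (phat a) - Real.log (p a)| ≤ κ)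
    (hQ : ∀ a, |Q a - Qstar a| ≤ ε) :
    ∑ a, (phat a * Real.exp (Q a / τ) / (∑ b, phat b * Real.exp (Q b / τ))) *
        Real.log ((phat a * Real.exp (Q a / τ) / (∑ b, phat b * Real.exp (Q b / τ))) /
          (p a * Real.exp (Qstar a / τ) / (∑ b, p b * Real.exp (Qstar b / τ))))
      ≤ 2 * (κ + ε / τ) := by
  have hw : ∀ a, 0 < phat a * exp (Q a / τ) := fun a => mul_pos (hphat a) (exp_pos _)
  have hv : ∀ a, 0 < p a * exp (Qstar a / τ) := fun a => mul_pos (hp a) (exp_pos _)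
  have hW : 0 < ∑ b, phat b * exp (Q b / τ) := sum_pos (fun b _ => hw b) univ_nonempty
  refine sum_mul_le_of_sum_eq_one (fun a _ => (div_pos (hw a) hW).le) ?_ fun a _ => ?_
  · rw [← sum_div, div_self hW.ne']
  · exact log_div_sum_div_div_sum_le hw hv
      (fun b => abs_log_gibbs_sub_log_gibbs_le (hphat b) (hp b) hτ (hprior b) (hQ b)) a

/-- **Naive additive KL bound** (`2κ′ + 2ε/τ`).
Under the same hypotheses as Theorem 1, the KL divergence between the cached and
true Gibbs posteriors satisfies `D_KL(π̃ ∥ π*) ≤ 2·(κ + ε/τ)`. -/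
theorem kl_naive_additive_bound
    {A : Type*} [Fintype A] [Nonempty A]
    (p phat : A → ℝ) (hp : ∀ a, 0 < p a) (hphat : ∀ a, 0 < phat a)
    (hpsum : ∑ a, p a = 1) (hphatsum : ∑ a, phat a = 1)
    (Qstar Q : A → ℝ) (τ : ℝ) (hτ : 0 < τ)
    (κ ε : ℝ) (hκ : 0 ≤ κ) (hε : 0 ≤ ε)
    (hprior : ∀ a, |Real.log (phat a) - Real.log (p a)| ≤ κ)
    (hQ : ∀ a, |Q a - Qstar a| ≤ ε) :
    ∑ a, (phat a * Real.exp (Q a / τ) / (∑ b, phat b * Real.exp (Q b / τ))) *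
        Real.log ((phat a * Real.exp (Q a / τ) / (∑ b, phat b * Real.exp (Q b / τ))) /
          (p a * Real.exp (Qstar a / τ) / (∑ b, p b * Real.exp (Qstar b / τ))))
      ≤ 2 * (κ + ε / τ) :=
  kl_naive_additive_bound_general p phat hp hphat Qstar Q τ hτ κ ε hprior hQ
end

section
/- (Pointwise log-ratio bound between cached and true posteriors.) For every action a ∈ A, the Gibbs posteriors satisfy |log π̃(a) − log π*(a)| ≤ 2·(κ + ε/τ). -/
/-!
If two positive weight vectors have pointwise log-ratio at most `c`, then `f ≤ exp c * g` termwise,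
so their sums (the partition functions) also have log-ratio at most `c`. Since the log of a Gibbs
weight is `log p + Q / τ` and the log of a posterior is the log of its weight minus the log of the
partition function, the two errors add up to `2 * (κ + ε / τ)`.
-/

open Finset Real

section

variable {ι : Type*} {s : Finset ι} {f g : ι → ℝ} {c : ℝ}

theorem log_sum_le_log_sum_add (hs : s.Nonempty) (hf : ∀ b ∈ s, 0 < f b) (hg : ∀ b ∈ s, 0 < g b)
    (h : ∀ b ∈ s, log (f b) ≤ log (g b) + c) :
    log (∑ b ∈ s, f b) ≤ log (∑ b ∈ s, g b) + c := by
  have hg_sum : 0 < ∑ b ∈ s, g b := sum_pos hg hs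
  have termwise : ∀ b ∈ s, f b ≤ exp c * g b := fun b hb =>
    calc f b = exp (log (f b)) := (exp_log (hf b hb)).symm
      _ ≤ exp (c + log (g b)) := exp_le_exp.2 (by linarith [h b hb])
      _ = exp c * g b := by rw [exp_add, exp_log (hg b hb)]
  calc log (∑ b ∈ s, f b) ≤ log (exp c * ∑ b ∈ s, g b) :=
        log_le_log (sum_pos hf hs) (mul_sum s g (exp c) ▸ sum_le_sum termwise)
    _ = log (∑ b ∈ s, g b) + c := by
        rw [log_mul (exp_ne_zero c) hg_sum.ne', log_exp, add_comm]

theorem abs_log_sum_sub_log_sum_le (hs : s.Nonempty) (hf : ∀ b ∈ s, 0 < f b)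
    (hg : ∀ b ∈ s, 0 < g b) (h : ∀ b ∈ s, |log (f b) - log (g b)| ≤ c) :
    |log (∑ b ∈ s, f b) - log (∑ b ∈ s, g b)| ≤ c := by
  rw [abs_sub_le_iff]
  constructor
  · linarith [log_sum_le_log_sum_add hs hf hg fun b hb => by linarith [(abs_le.1 (h b hb)).2]]
  · linarith [log_sum_le_log_sum_add hs hg hf fun b hb => by linarith [(abs_le.1 (h b hb)).1]]

theorem abs_log_div_sum_sub_log_div_sum_le {a : ι} (ha : a ∈ s) (hf : ∀ b ∈ s, 0 < f b)
    (hg : ∀ b ∈ s, 0 < g b) (h : ∀ b ∈ s, |log (f b) - log (g b)| ≤ c) :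
    |log (f a / ∑ b ∈ s, f b) - log (g a / ∑ b ∈ s, g b)| ≤ 2 * c := by
  have hs : s.Nonempty := ⟨a, ha⟩
  have hZ := abs_log_sum_sub_log_sum_le hs hf hg h
  rw [log_div (hf a ha).ne' (sum_pos hf hs).ne', log_div (hg a ha).ne' (sum_pos hg hs).ne']
  calc _ = |(log (f a) - log (g a)) - (log (∑ b ∈ s, f b) - log (∑ b ∈ s, g b))| := by ring_nf
    _ ≤ |log (f a) - log (g a)| + |log (∑ b ∈ s, f b) - log (∑ b ∈ s, g b)| := abs_sub _ _
    _ ≤ 2 * c := by linarith [h a ha]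

theorem abs_log_mul_exp_sub_le {x y u v τ κ ε : ℝ} (hx : 0 < x) (hy : 0 < y) (hτ : 0 < τ)
    (hxy : |log x - log y| ≤ κ) (huv : |u - v| ≤ ε) :
    |log (x * exp (u / τ)) - log (y * exp (v / τ))| ≤ κ + ε / τ := by
  rw [log_mul hx.ne' (exp_ne_zero _), log_mul hy.ne' (exp_ne_zero _), log_exp, log_exp]
  have hdiv : |u / τ - v / τ| ≤ ε / τ := by
    rw [div_sub_div_same, abs_div, abs_of_pos hτ]
    gcongr
  calc _ = |(log x - log y) + (u / τ - v / τ)| := by ring_nf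
    _ ≤ |log x - log y| + |u / τ - v / τ| := abs_add_le _ _
    _ ≤ κ + ε / τ := add_le_add hxy hdiv

end

theorem pointwise_log_ratio_bound_general
    {A : Type*} [Fintype A]
    (p phat : A → ℝ) (hp : ∀ a, 0 < p a) (hphat : ∀ a, 0 < phat a)
    (Qstar Q : A → ℝ) (τ : ℝ) (hτ : 0 < τ)
    (κ ε : ℝ)
    (hprior : ∀ a, |Real.log (phat a) - Real.log (p a)| ≤ κ)
    (hQ : ∀ a, |Q a - Qstar a| ≤ ε) :
    ∀ a : A,
      |Real.log (phat a * Real.exp (Q a / τ) / (∑ b, phat b * Real.exp (Q b / τ)))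
        - Real.log (p a * Real.exp (Qstar a / τ) / (∑ b, p b * Real.exp (Qstar b / τ)))|
      ≤ 2 * (κ + ε / τ) := fun a =>
  abs_log_div_sum_sub_log_div_sum_le (mem_univ a)
    (fun b _ => mul_pos (hphat b) (exp_pos _)) (fun b _ => mul_pos (hp b) (exp_pos _))
    (fun b _ => abs_log_mul_exp_sub_le (hphat b) (hp b) hτ (hprior b) (hQ b))

/-- **Pointwise log-ratio bound between cached and true posteriors.**
For every action `a`, the Gibbs posteriors `π̃(a) = p̂(a)·exp(Q(a)/τ)/Z̃` and
`π*(a) = p(a)·exp(Q*(a)/τ)/Z*` satisfy `|log π̃(a) − log π*(a)| ≤ 2·(κ + ε/τ)`. -/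
theorem pointwise_log_ratio_bound
    {A : Type*} [Fintype A] [Nonempty A]
    (p phat : A → ℝ) (hp : ∀ a, 0 < p a) (hphat : ∀ a, 0 < phat a)
    (hpsum : ∑ a, p a = 1) (hphatsum : ∑ a, phat a = 1)
    (Qstar Q : A → ℝ) (τ : ℝ) (hτ : 0 < τ)
    (κ ε : ℝ) (hκ : 0 ≤ κ) (hε : 0 ≤ ε)
    (hprior : ∀ a, |Real.log (phat a) - Real.log (p a)| ≤ κ)
    (hQ : ∀ a, |Q a - Qstar a| ≤ ε) :
    ∀ a : A,
      |Real.log (phat a * Real.exp (Q a / τ) / (∑ b, phat b * Real.exp (Q b / τ)))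
        - Real.log (p a * Real.exp (Qstar a / τ) / (∑ b, p b * Real.exp (Qstar b / τ)))|
      ≤ 2 * (κ + ε / τ) :=
  pointwise_log_ratio_bound_general p phat hp hphat Qstar Q τ hτ κ ε hprior hQ
end

section
/- (Theorem 1 under uniform state visitation, μ(s) = E_s[μ(s)].) If κ + ε/τ > 0, then D_KL(π̃ ∥ π*) ≤ 2·(κ + ε/τ)/(1 − exp(−(κ + ε/τ))). -/
/-! Both posteriors are normalized positive weights `w = p̂·exp(Q/τ)` and `w* = p·exp(Q*/τ)`
whose logarithms differ by at most `δ = κ + ε/τ` everywhere. Then the partition functions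
differ by a factor at most `exp δ`, so every log-ratio `log (π̃ a / π* a)` is at most `2δ`, hence
so is its `π̃`-average, the divergence. Finally `2δ ≤ 2δ / (1 - exp (-δ))` since
`0 < 1 - exp (-δ) ≤ 1`. -/

open Real Finset

section Normalized

variable {A : Type*} [Fintype A]

noncomputable def normalized (w : A → ℝ) (a : A) : ℝ := w a / ∑ b, w b

theorem sum_normalized [Nonempty A] {w : A → ℝ} (hw : ∀ a, 0 < w a) :
    ∑ a, normalized w a = 1 := by
  simp only [normalized]
  rw [← Finset.sum_div,
    div_self (Finset.sum_pos (fun a _ => hw a) univ_nonempty).ne']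

theorem normalized_nonneg [Nonempty A] {w : A → ℝ} (hw : ∀ a, 0 < w a) (a : A) :
    0 ≤ normalized w a :=
  (div_pos (hw a) (Finset.sum_pos (fun b _ => hw b) univ_nonempty)).le

theorem log_sum_le_log_sum_add_s6 [Nonempty A] {w w' : A → ℝ} {δ : ℝ}
    (hw : ∀ a, 0 < w a) (hw' : ∀ a, 0 < w' a) (h : ∀ a, log (w' a) ≤ log (w a) + δ) :
    log (∑ a, w' a) ≤ log (∑ a, w a) + δ := by
  have hsum : ∑ a, w' a ≤ exp δ * ∑ a, w a := by
    rw [Finset.mul_sum]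
    refine Finset.sum_le_sum fun a _ => ?_
    calc w' a = exp (log (w' a)) := (exp_log (hw' a)).symm
      _ ≤ exp (log (w a) + δ) := exp_le_exp.mpr (h a)
      _ = exp δ * w a := by rw [exp_add, exp_log (hw a), mul_comm]
  have hpos : 0 < ∑ a, w a := Finset.sum_pos (fun a _ => hw a) univ_nonempty
  calc log (∑ a, w' a) ≤ log (exp δ * ∑ a, w a) :=
        log_le_log (Finset.sum_pos (fun a _ => hw' a) univ_nonempty) hsum
    _ = log (∑ a, w a) + δ := by rw [log_mul (exp_pos δ).ne' hpos.ne', log_exp, add_comm]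

theorem log_normalized_div_normalized_le [Nonempty A] {w w' : A → ℝ} {δ : ℝ}
    (hw : ∀ a, 0 < w a) (hw' : ∀ a, 0 < w' a) (h : ∀ a, |log (w a) - log (w' a)| ≤ δ)
    (a : A) : log (normalized w a / normalized w' a) ≤ 2 * δ := by
  have hZ : 0 < ∑ b, w b := Finset.sum_pos (fun b _ => hw b) univ_nonempty
  have hZ' : 0 < ∑ b, w' b := Finset.sum_pos (fun b _ => hw' b) univ_nonempty
  have hlogZ := log_sum_le_log_sum_add_s6 (δ := δ) hw hw' fun b => by linarith [(abs_le.mp (h b)).1]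
  have hlog_a := (abs_le.mp (h a)).2
  rw [normalized, normalized, log_div (div_pos (hw a) hZ).ne' (div_pos (hw' a) hZ').ne',
    log_div (hw a).ne' hZ.ne', log_div (hw' a).ne' hZ'.ne']
  linarith

end Normalized

theorem sum_mul_le_of_le {A : Type*} [Fintype A] {q f : A → ℝ} {C : ℝ}
    (hq : ∀ a, 0 ≤ q a) (hq_sum : ∑ a, q a = 1) (hf : ∀ a, f a ≤ C) :
    ∑ a, q a * f a ≤ C :=
  calc ∑ a, q a * f a ≤ ∑ a, q a * C :=
        Finset.sum_le_sum fun a _ => mul_le_mul_of_nonneg_left (hf a) (hq a)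
    _ = C := by rw [← Finset.sum_mul, hq_sum, one_mul]

theorem abs_log_mul_exp_sub_log_mul_exp_le {x x' y y' τ κ ε : ℝ}
    (hx : 0 < x) (hx' : 0 < x') (hτ : 0 < τ)
    (hlog : |log x - log x'| ≤ κ) (hy : |y - y'| ≤ ε) :
    |log (x * exp (y / τ)) - log (x' * exp (y' / τ))| ≤ κ + ε / τ := by
  rw [log_mul hx.ne' (exp_pos _).ne', log_mul hx'.ne' (exp_pos _).ne', log_exp, log_exp,
    add_sub_add_comm, ← sub_div]
  calc |log x - log x' + (y - y') / τ| ≤ |log x - log x'| + |y - y'| / τ := by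
        rw [← abs_of_pos hτ, ← abs_div, abs_of_pos hτ]; exact abs_add_le _ _
    _ ≤ κ + ε / τ := add_le_add hlog (div_le_div_of_nonneg_right hy hτ.le)

theorem kl_bound_uniform_visitation_general
    {A : Type*} [Fintype A] [Nonempty A]
    (p phat : A → ℝ) (hp : ∀ a, 0 < p a) (hphat : ∀ a, 0 < phat a)
    (Qstar Q : A → ℝ) (τ : ℝ) (hτ : 0 < τ)
    (κ ε : ℝ)
    (hpos : 0 < κ + ε / τ)
    (hprior : ∀ a, |Real.log (phat a) - Real.log (p a)| ≤ κ)
    (hQ : ∀ a, |Q a - Qstar a| ≤ ε) :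
    ∑ a, (phat a * Real.exp (Q a / τ) / (∑ b, phat b * Real.exp (Q b / τ))) *
        Real.log ((phat a * Real.exp (Q a / τ) / (∑ b, phat b * Real.exp (Q b / τ))) /
          (p a * Real.exp (Qstar a / τ) / (∑ b, p b * Real.exp (Qstar b / τ))))
      ≤ 2 * (κ + ε / τ) / (1 - Real.exp (-(κ + ε / τ))) := by
  set w := fun a => phat a * exp (Q a / τ)
  set wstar := fun a => p a * exp (Qstar a / τ)
  have hw : ∀ a, 0 < w a := fun a => mul_pos (hphat a) (exp_pos _)
  have hwstar : ∀ a, 0 < wstar a := fun a => mul_pos (hp a) (exp_pos _)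
  have hlog_ratio (a : A) : log (normalized w a / normalized wstar a) ≤ 2 * (κ + ε / τ) :=
    log_normalized_div_normalized_le hw hwstar (fun b =>
      abs_log_mul_exp_sub_log_mul_exp_le (hphat b) (hp b) hτ (hprior b) (hQ b)) a
  have hkl : ∑ a, normalized w a * log (normalized w a / normalized wstar a) ≤
      2 * (κ + ε / τ) :=
    sum_mul_le_of_le (normalized_nonneg hw) (sum_normalized hw) hlog_ratio
  have hden : 0 < 1 - exp (-(κ + ε / τ)) :=
    sub_pos.mpr (exp_lt_one_iff.mpr (neg_lt_zero.mpr hpos))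
  exact hkl.trans (le_div_self (by positivity) hden (sub_le_self _ (exp_pos _).le))

/-- **Theorem 1 under uniform state visitation** (`μ(s) = E_s[μ(s)]`, i.e. ratio 1).
If `κ + ε/τ > 0`, then `D_KL(π̃ ∥ π*) ≤ 2·(κ + ε/τ)/(1 − exp(−(κ + ε/τ)))`. -/
theorem kl_bound_uniform_visitation
    {A : Type*} [Fintype A] [Nonempty A]
    (p phat : A → ℝ) (hp : ∀ a, 0 < p a) (hphat : ∀ a, 0 < phat a)
    (hpsum : ∑ a, p a = 1) (hphatsum : ∑ a, phat a = 1)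
    (Qstar Q : A → ℝ) (τ : ℝ) (hτ : 0 < τ)
    (κ ε : ℝ) (hκ : 0 ≤ κ) (hε : 0 ≤ ε)
    (hpos : 0 < κ + ε / τ)
    (hprior : ∀ a, |Real.log (phat a) - Real.log (p a)| ≤ κ)
    (hQ : ∀ a, |Q a - Qstar a| ≤ ε) :
    ∑ a, (phat a * Real.exp (Q a / τ) / (∑ b, phat b * Real.exp (Q b / τ))) *
        Real.log ((phat a * Real.exp (Q a / τ) / (∑ b, phat b * Real.exp (Q b / τ))) /
          (p a * Real.exp (Qstar a / τ) / (∑ b, p b * Real.exp (Qstar b / τ))))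
      ≤ 2 * (κ + ε / τ) / (1 - Real.exp (-(κ + ε / τ))) :=
  kl_bound_uniform_visitation_general p phat hp hphat Qstar Q τ hτ κ ε hpos hprior hQ
end

section
/- (Reverse-direction KL bound, by symmetry of the hypotheses.) The KL divergence in the reverse direction satisfies D_KL(π* ∥ π̃) ≤ 2·(κ + ε/τ). -/
/-!
Both Gibbs weights `p·exp(Q*/τ)` and `p̂·exp(Q/τ)` have logarithms within `c = κ + ε/τ` of each
other at every action. Summing the pointwise bound `p̂·exp(Q/τ) ≤ e^c·p·exp(Q*/τ)` shows that
the log-partition functions also differ by at most `c`, so every log-ratio `log(π*(a)/π̃(a))`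
is at most `2c`, and so is its `π*`-average, the divergence.
-/

open Finset Real

lemma le_mul_exp_of_log_sub_le {x y c : ℝ} (hx : 0 < x) (hy : 0 < y)
    (h : log y - log x ≤ c) : y ≤ x * exp c := by
  rw [← log_le_log_iff hy (by positivity), log_mul hx.ne' (exp_pos c).ne', log_exp]
  linarith

lemma log_sum_sub_log_sum_le {ι : Type*} {s : Finset ι} (hs : s.Nonempty) {x y : ι → ℝ} {c : ℝ}
    (hx : ∀ i ∈ s, 0 < x i) (hy : ∀ i ∈ s, 0 < y i)
    (h : ∀ i ∈ s, log (y i) - log (x i) ≤ c) :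
    log (∑ i ∈ s, y i) - log (∑ i ∈ s, x i) ≤ c := by
  have hX : 0 < ∑ i ∈ s, x i := sum_pos hx hs
  have hY : 0 < ∑ i ∈ s, y i := sum_pos hy hs
  have hle : ∑ i ∈ s, y i ≤ (∑ i ∈ s, x i) * exp c := by
    rw [sum_mul]
    exact sum_le_sum fun i hi => le_mul_exp_of_log_sub_le (hx i hi) (hy i hi) (h i hi)
  have := log_le_log hY hle
  rw [log_mul hX.ne' (exp_pos c).ne', log_exp] at this
  linarith

section Normalized

variable {ι : Type*} [Fintype ι] [Nonempty ι] {x y : ι → ℝ} {c : ℝ}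

lemma sum_div_sum_mul_le (hx : ∀ i, 0 < x i) {f : ι → ℝ} {M : ℝ} (hf : ∀ i, f i ≤ M) :
    ∑ i, x i / (∑ j, x j) * f i ≤ M := by
  have hX : 0 < ∑ j, x j := sum_pos (fun i _ => hx i) univ_nonempty
  calc ∑ i, x i / (∑ j, x j) * f i
      ≤ ∑ i, x i / (∑ j, x j) * M :=
        sum_le_sum fun i _ => mul_le_mul_of_nonneg_left (hf i) (div_pos (hx i) hX).le
    _ = M := by rw [← sum_mul, ← sum_div, div_self hX.ne', one_mul]

lemma log_div_sum_div_div_sum_le_s7 (hx : ∀ i, 0 < x i) (hy : ∀ i, 0 < y i)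
    (h : ∀ i, |log (x i) - log (y i)| ≤ c) (i : ι) :
    log ((x i / ∑ j, x j) / (y i / ∑ j, y j)) ≤ 2 * c := by
  have hX : 0 < ∑ j, x j := sum_pos (fun i _ => hx i) univ_nonempty
  have hY : 0 < ∑ j, y j := sum_pos (fun i _ => hy i) univ_nonempty
  have hZ : log (∑ j, y j) - log (∑ j, x j) ≤ c :=
    log_sum_sub_log_sum_le univ_nonempty (fun i _ => hx i) (fun i _ => hy i)
      fun i _ => by linarith [(abs_le.mp (h i)).1]
  rw [log_div (div_pos (hx i) hX).ne' (div_pos (hy i) hY).ne', log_div (hx i).ne' hX.ne',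
    log_div (hy i).ne' hY.ne']
  linarith [(abs_le.mp (h i)).2]

theorem kl_div_sum_div_sum_le (hx : ∀ i, 0 < x i) (hy : ∀ i, 0 < y i)
    (h : ∀ i, |log (x i) - log (y i)| ≤ c) :
    ∑ i, x i / (∑ j, x j) * log ((x i / ∑ j, x j) / (y i / ∑ j, y j)) ≤ 2 * c :=
  sum_div_sum_mul_le hx (log_div_sum_div_div_sum_le_s7 hx hy h)

end Normalized

lemma abs_log_mul_exp_sub_le_s7 {p p' u u' κ ε : ℝ} (hp : 0 < p) (hp' : 0 < p')
    (hlog : |log p' - log p| ≤ κ) (hu : |u' - u| ≤ ε) {τ : ℝ} (hτ : 0 < τ) :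
    |log (p * exp (u / τ)) - log (p' * exp (u' / τ))| ≤ κ + ε / τ := by
  rw [log_mul hp.ne' (exp_pos _).ne', log_mul hp'.ne' (exp_pos _).ne', log_exp, log_exp,
    show log p + u / τ - (log p' + u' / τ) = -((log p' - log p) + (u' - u) / τ) by ring, abs_neg]
  refine (abs_add_le _ _).trans (add_le_add hlog ?_)
  rw [abs_div, abs_of_pos hτ]
  exact div_le_div_of_nonneg_right hu hτ.le

theorem kl_reverse_bound_general
    {A : Type*} [Fintype A] [Nonempty A]
    (p phat : A → ℝ) (hp : ∀ a, 0 < p a) (hphat : ∀ a, 0 < phat a)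
    (Qstar Q : A → ℝ) (τ : ℝ) (hτ : 0 < τ)
    (κ ε : ℝ)
    (hprior : ∀ a, |Real.log (phat a) - Real.log (p a)| ≤ κ)
    (hQ : ∀ a, |Q a - Qstar a| ≤ ε) :
    ∑ a, (p a * Real.exp (Qstar a / τ) / (∑ b, p b * Real.exp (Qstar b / τ))) *
        Real.log ((p a * Real.exp (Qstar a / τ) / (∑ b, p b * Real.exp (Qstar b / τ))) /
          (phat a * Real.exp (Q a / τ) / (∑ b, phat b * Real.exp (Q b / τ))))
      ≤ 2 * (κ + ε / τ) :=
  kl_div_sum_div_sum_le (fun a => mul_pos (hp a) (exp_pos _))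
    (fun a => mul_pos (hphat a) (exp_pos _))
    fun a => abs_log_mul_exp_sub_le_s7 (hp a) (hphat a) (hprior a) (hQ a) hτ

/-- **Reverse-direction KL bound** (by symmetry of the hypotheses).
Under the same hypotheses as Theorem 1, `D_KL(π* ∥ π̃) ≤ 2·(κ + ε/τ)`. -/
theorem kl_reverse_bound
    {A : Type*} [Fintype A] [Nonempty A]
    (p phat : A → ℝ) (hp : ∀ a, 0 < p a) (hphat : ∀ a, 0 < phat a)
    (hpsum : ∑ a, p a = 1) (hphatsum : ∑ a, phat a = 1)
    (Qstar Q : A → ℝ) (τ : ℝ) (hτ : 0 < τ)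
    (κ ε : ℝ) (hκ : 0 ≤ κ) (hε : 0 ≤ ε)
    (hprior : ∀ a, |Real.log (phat a) - Real.log (p a)| ≤ κ)
    (hQ : ∀ a, |Q a - Qstar a| ≤ ε) :
    ∑ a, (p a * Real.exp (Qstar a / τ) / (∑ b, p b * Real.exp (Qstar b / τ))) *
        Real.log ((p a * Real.exp (Qstar a / τ) / (∑ b, p b * Real.exp (Qstar b / τ))) /
          (phat a * Real.exp (Q a / τ) / (∑ b, phat b * Real.exp (Q b / τ))))
      ≤ 2 * (κ + ε / τ) :=
  kl_reverse_bound_general p phat hp hphat Qstar Q τ hτ κ ε hprior hQ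
end
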